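/- Let D ∈ (0, π). Suppose nonnegative couplings (K_{ij}) satisfy: for every choice of δ : M → {0,1}, |ω̄_k − ω̄_l| − (2K_{kl}/n) sin D − (sin D / n) Σ_{m∈M} [δ(m) K_{km} + (1 − δ(m)) K_{lm}] ≤ 0, where M is the set of common neighbors of k and l. Then whenever φ_k − φ_l = D and φ_l ≤ φ_m ≤ φ_k for all m ∈ M, one has ω̄_k − ω̄_l − (2K_{kl}/n) sin D − Σ_{m∈M} [(K_{km}/n) sin(φ_k − φ_m) + (K_{lm}/n) sin(φ_m − φ_l)] ≤ 0. -/

import Mathlib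

/-!
Choose `δ m = 1` exactly when `K_{km} ≤ K_{lm}`, so that the constraint for this `δ` involves
`sin D · min (K_{km}, K_{lm})` termwise. With `a = φ_k - φ_m` and `b = φ_m - φ_l` in `[0, π]` and
`a + b = D`, subadditivity of `sin` on `[0, π]` gives
`sin D · min (K_{km}, K_{lm}) ≤ K_{km} sin a + K_{lm} sin b`, and `ω̄_k - ω̄_l ≤ |ω̄_k - ω̄_l|`.
-/

open Real Finset

theorem Real.sin_add_le_sin_add_sin {a b : ℝ} (ha : 0 ≤ sin a) (hb : 0 ≤ sin b) :
    sin (a + b) ≤ sin a + sin b := by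
  rw [sin_add]
  nlinarith [cos_le_one a, cos_le_one b]

theorem mul_min_le_of_le_add {s u v x y : ℝ} (hs : s ≤ u + v) (hu : 0 ≤ u) (hv : 0 ≤ v)
    (hx : 0 ≤ x) (hy : 0 ≤ y) : s * min x y ≤ u * x + v * y :=
  calc s * min x y ≤ (u + v) * min x y := mul_le_mul_of_nonneg_right hs (le_min hx hy)
    _ = u * min x y + v * min x y := add_mul u v _
    _ ≤ u * x + v * y := add_le_add (mul_le_mul_of_nonneg_left (min_le_left x y) hu)
        (mul_le_mul_of_nonneg_left (min_le_right x y) hv)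

theorem Real.sin_add_mul_min_le {a b x y : ℝ} (ha : 0 ≤ a) (hb : 0 ≤ b) (hab : a + b ≤ π)
    (hx : 0 ≤ x) (hy : 0 ≤ y) : sin (a + b) * min x y ≤ sin a * x + sin b * y := by
  have hsa : 0 ≤ sin a := sin_nonneg_of_nonneg_of_le_pi ha (by linarith)
  have hsb : 0 ≤ sin b := sin_nonneg_of_nonneg_of_le_pi hb (by linarith)
  exact mul_min_le_of_le_add (sin_add_le_sin_add_sin hsa hsb) hsa hsb hx hy

theorem ite_mul_add_one_sub_ite_mul_eq_min (x y : ℝ) :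
    (if x ≤ y then 1 else 0) * x + (1 - if x ≤ y then 1 else 0) * y = min x y := by
  split_ifs with h
  · simp [min_eq_left h]
  · simp [min_eq_right (le_of_not_ge h)]

theorem constraints_imply_phase_inequality_general {ι : Type*} (M : Finset ι)
    (n : ℕ) (D : ℝ) (hDπ : D < π)
    (ωk ωl Kkl : ℝ)
    (Kk Kl : ι → ℝ) (hKk : ∀ m ∈ M, 0 ≤ Kk m) (hKl : ∀ m ∈ M, 0 ≤ Kl m)
    (hconstr : ∀ δ : ι → ℝ, (∀ m ∈ M, δ m = 0 ∨ δ m = 1) →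
        |ωk - ωl| - 2 * Kkl / n * Real.sin D
          - Real.sin D / n * ∑ m ∈ M, (δ m * Kk m + (1 - δ m) * Kl m) ≤ 0)
    (φk φl : ℝ) (φ : ι → ℝ) (hkl : φk - φl = D)
    (hφ : ∀ m ∈ M, φl ≤ φ m ∧ φ m ≤ φk) :
    ωk - ωl - 2 * Kkl / n * Real.sin D
      - ∑ m ∈ M, (Kk m / n * Real.sin (φk - φ m) + Kl m / n * Real.sin (φ m - φl))
      ≤ 0 := by
  have hconstr_min := hconstr (fun m => if Kk m ≤ Kl m then 1 else 0)
    (fun m _ => by split_ifs <;> simp)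
  simp only [ite_mul_add_one_sub_ite_mul_eq_min] at hconstr_min
  have hsum : sin D / n * ∑ m ∈ M, min (Kk m) (Kl m)
      ≤ ∑ m ∈ M, (Kk m / n * sin (φk - φ m) + Kl m / n * sin (φ m - φl)) := by
    rw [mul_sum]
    refine sum_le_sum fun m hm => ?_
    obtain ⟨hlm, hmk⟩ := hφ m hm
    have hD : (φk - φ m) + (φ m - φl) = D := by linarith
    have hterm := sin_add_mul_min_le (sub_nonneg.2 hmk) (sub_nonneg.2 hlm) (by linarith)
      (hKk m hm) (hKl m hm)
    rw [hD] at hterm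
    calc sin D / n * min (Kk m) (Kl m) = sin D * min (Kk m) (Kl m) / n := div_mul_eq_mul_div _ _ _
      _ ≤ (sin (φk - φ m) * Kk m + sin (φ m - φl) * Kl m) / n :=
        div_le_div_of_nonneg_right hterm n.cast_nonneg
      _ = _ := by ring
  linarith [le_abs_self (ωk - ωl)]

theorem constraints_imply_phase_inequality {ι : Type*} (M : Finset ι)
    (n : ℕ) (hn : 0 < n) (D : ℝ) (hD0 : 0 < D) (hDπ : D < π)
    (ωk ωl Kkl : ℝ) (hKkl : 0 ≤ Kkl)
    (Kk Kl : ι → ℝ) (hKk : ∀ m ∈ M, 0 ≤ Kk m) (hKl : ∀ m ∈ M, 0 ≤ Kl m)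
    (hconstr : ∀ δ : ι → ℝ, (∀ m ∈ M, δ m = 0 ∨ δ m = 1) →
        |ωk - ωl| - 2 * Kkl / n * Real.sin D
          - Real.sin D / n * ∑ m ∈ M, (δ m * Kk m + (1 - δ m) * Kl m) ≤ 0)
    (φk φl : ℝ) (φ : ι → ℝ) (hkl : φk - φl = D)
    (hφ : ∀ m ∈ M, φl ≤ φ m ∧ φ m ≤ φk) :
    ωk - ωl - 2 * Kkl / n * Real.sin D
      - ∑ m ∈ M, (Kk m / n * Real.sin (φk - φ m) + Kl m / n * Real.sin (φ m - φl))
      ≤ 0 :=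
  constraints_imply_phase_inequality_general M n D hDπ ωk ωl Kkl Kk Kl hKk hKl hconstr φk φl φ hkl
    hφ
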